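/- arXiv:2003.06935 — 7 statements merged into one kernel-verified Lean document; each statement's English description precedes it below -/
import Mathlib

section
/- Let (X,d) be a compact metric space and equip the space X^ℤ of bi-infinite sequences with the sup-metric d_∞(x,y) = sup_{n∈ℤ} d(x_n, y_n). Then (X^ℤ, d_∞) is connected if and only if (X,d) is connected. -/
open Set Metric

private lemma bdd_dists {X : Type*} [MetricSpace X] [CompactSpace X]
    (f g : ℤ → X) : BddAbove (Set.range fun n => dist (f n) (g n)) := by
  obtain ⟨C, hC⟩ := Metric.isBounded_iff.1 (isCompact_univ (X := X)).isBounded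
  exact ⟨C, by rintro r ⟨n, rfl⟩; exact hC (Set.mem_univ _) (Set.mem_univ _)⟩

private lemma aux_forward {X Y : Type*} [MetricSpace X] [CompactSpace X] [MetricSpace Y]
    (e : Y ≃ (ℤ → X)) (he : ∀ y z : Y, dist y z = ⨆ n : ℤ, dist (e y n) (e z n))
    (hY : ConnectedSpace Y) : ConnectedSpace X := by
  have hcont : Continuous fun y : Y => e y 0 := by
    rw [Metric.continuous_iff]
    intro b ε hε
    refine ⟨ε, hε, fun a ha => ?_⟩
    calc dist (e a 0) (e b 0) ≤ ⨆ n : ℤ, dist (e a n) (e b n) :=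
          le_ciSup (bdd_dists _ _) 0
      _ = dist a b := (he a b).symm
      _ < ε := ha
  have hsurj : Function.Surjective fun y : Y => e y 0 := fun a =>
    ⟨e.symm (fun _ => a), by simp⟩
  exact hsurj.connectedSpace hcont

private lemma aux_backward {X Y : Type*} [MetricSpace X] [CompactSpace X] [MetricSpace Y]
    (e : Y ≃ (ℤ → X)) (he : ∀ y z : Y, dist y z = ⨆ n : ℤ, dist (e y n) (e z n))
    (hX : ConnectedSpace X) : ConnectedSpace Y := by
  obtain ⟨b₀⟩ : Nonempty X := hX.toNonempty
  set c : Y := e.symm (fun _ => b₀) with hc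
  -- Every point of `Y` whose associated sequence has finite range lies in the
  -- connected component of the constant sequence `c`.
  have key : ∀ y : Y, (Set.range (e y)).Finite → y ∈ connectedComponent c := by
    intro y hfin
    haveI : Fintype ↥(Set.range (e y)) := hfin.fintype
    set Φ : (↥(Set.range (e y)) → X) → Y :=
      fun u => e.symm (fun n => u ⟨e y n, Set.mem_range_self n⟩) with hΦ
    have hΦc : Continuous Φ := by
      rw [Metric.continuous_iff]
      intro u ε hε
      refine ⟨ε, hε, fun v hv => ?_⟩
      have hle : dist (Φ v) (Φ u) ≤ dist v u := by
        rw [he]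
        refine ciSup_le fun n => ?_
        simp only [hΦ, Equiv.apply_symm_apply]
        exact dist_le_pi_dist v u _
      exact lt_of_le_of_lt hle hv
    have hpre : IsPreconnected (Set.range Φ) := isPreconnected_range hΦc
    have hcm : c ∈ Set.range Φ := ⟨fun _ => b₀, rfl⟩
    have hym : y ∈ Set.range Φ := by
      refine ⟨fun j => (j : X), ?_⟩
      simp only [hΦ]
      exact (by rw [show (fun n => e y n) = e y from rfl, Equiv.symm_apply_apply])
    exact hpre.subset_connectedComponent hcm hym
  -- Finite-range points are dense.
  have happrox : ∀ z : Y, ∀ ε : ℝ, 0 < ε →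
      ∃ y : Y, (Set.range (e y)).Finite ∧ dist z y < ε := by
    intro z ε hε
    obtain ⟨t, htf, htc⟩ :=
      (Metric.totallyBounded_iff.1 (isCompact_univ (X := X)).totallyBounded) (ε/2)
        (by linarith)
    have hch : ∀ n : ℤ, ∃ a, a ∈ t ∧ e z n ∈ Metric.ball a (ε/2) := fun n => by
      simpa using htc (Set.mem_univ (e z n))
    choose a hat hab using hch
    refine ⟨e.symm a, ?_, ?_⟩
    · refine htf.subset ?_
      rw [Equiv.apply_symm_apply]
      rintro x ⟨n, rfl⟩; exact hat n
    · have hle : dist z (e.symm a) ≤ ε/2 := by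
        rw [he]
        refine ciSup_le fun n => ?_
        rw [Equiv.apply_symm_apply]
        exact le_of_lt (Metric.mem_ball.1 (hab n))
      linarith
  have hcc : connectedComponent c = Set.univ := by
    refine Set.eq_univ_of_forall fun z => ?_
    have hz : z ∈ closure (connectedComponent c) := by
      rw [Metric.mem_closure_iff]
      intro ε hε
      obtain ⟨y, hy1, hy2⟩ := happrox z ε hε
      exact ⟨y, key y hy1, hy2⟩
    rwa [isClosed_connectedComponent.closure_eq] at hz
  haveI : PreconnectedSpace Y := ⟨by rw [← hcc]; exact isPreconnected_connectedComponent⟩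
  exact ⟨⟨c⟩⟩

/-- For a compact metric space `X`, the sequence space `X^ℤ` equipped with the
sup-metric is connected if and only if `X` is connected. -/
theorem stmt_0 {X : Type*} [MetricSpace X] [CompactSpace X]
    (D : MetricSpace (ℤ → X))
    (hD : ∀ x y : ℤ → X, D.dist x y = ⨆ n : ℤ, dist (x n) (y n)) :
    @ConnectedSpace (ℤ → X) D.toUniformSpace.toTopologicalSpace ↔ ConnectedSpace X := by
  constructor
  · intro h
    exact @aux_forward X (ℤ → X) _ _ D (Equiv.refl _) hD h
  · intro h
    exact @aux_backward X (ℤ → X) _ _ D (Equiv.refl _) hD h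
end

section
/- Let K ⊂ ℝⁿ be a nonempty compact subset and ε > 0. Then the boundary of the closed ε-neighborhood N_ε(K) = {x : dist(x,K) ≤ ε} has Lebesgue measure zero. -/
/-!
The frontier of the closed `ε`-neighbourhood of `K` lies in the level set
`{x | infDist x K = ε}`. Each point `x` of it has a nearest point `y` of `closure K` at distance
`ε`, and `ball y ε` misses the level set. On the segment from `x` to `y` this ball contains a
closed ball of radius `r / 4` inside `closedBall x r`, for every small `r`. So the level set
fills at most a fraction `1 - 4⁻ⁿ` of every small ball around each of its points, and by the
Lebesgue density theorem it is null.
-/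

open Metric MeasureTheory Filter Set Module
open scoped Topology

theorem Metric.frontier_cthickening_subset_infDist_eq {α : Type*} [PseudoMetricSpace α]
    (K : Set α) {δ : ℝ} (hδ : 0 ≤ δ) :
    frontier (cthickening δ K) ⊆ {x | infDist x K = δ} := fun _ hx => by
  rw [mem_ofPred_eq, infDist, frontier_cthickening_subset K hx, ENNReal.toReal_ofReal hδ]

def IsPorous {α : Type*} [PseudoMetricSpace α] (κ : ℝ) (S : Set α) : Prop :=
  ∀ x ∈ S, ∀ᶠ r in 𝓝[>] 0, ∃ w, closedBall w (κ * r) ⊆ closedBall x r \ S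

section NormedSpace

variable {E : Type*} [NormedAddCommGroup E] [NormedSpace ℝ E]

theorem exists_closedBall_subset_closedBall_inter_ball {x y : E} {r : ℝ} (hr : 0 < r)
    (hry : r ≤ 2 * dist x y) :
    ∃ w, closedBall w (4⁻¹ * r) ⊆ closedBall x r ∩ ball y (dist x y) := by
  have hxy : 0 < dist x y := by linarith
  set t := r / (2 * dist x y)
  have ht : 0 < t := by positivity
  have ht1 : t ≤ 1 := (div_le_one (by positivity)).2 hry
  have htd : t * dist x y = r / 2 := by simp only [t]; field_simp
  have hwx : dist (AffineMap.lineMap x y t) x = r / 2 := by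
    rw [dist_lineMap_left, Real.norm_of_nonneg ht.le, htd]
  have hwy : dist (AffineMap.lineMap x y t) y = dist x y - r / 2 := by
    rw [dist_lineMap_right, Real.norm_of_nonneg (sub_nonneg.2 ht1), sub_mul, one_mul, htd]
  refine ⟨AffineMap.lineMap x y t, fun z hz => ⟨mem_closedBall.2 ?_, mem_ball.2 ?_⟩⟩ <;>
    rw [mem_closedBall] at hz
  · linarith [dist_triangle z (AffineMap.lineMap x y t) x]
  · linarith [dist_triangle z (AffineMap.lineMap x y t) y]

theorem isPorous_infDist_eq [ProperSpace E] (K : Set E) {ε : ℝ} (hε : 0 < ε) :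
    IsPorous 4⁻¹ {x | infDist x K = ε} := by
  intro x (hx : infDist x K = ε)
  have hK : K.Nonempty := nonempty_iff_ne_empty.2 fun hK => by
    rw [hK, infDist_empty] at hx
    exact hε.ne hx
  obtain ⟨y, hyK, hxy⟩ := exists_mem_closure_infDist_eq_dist hK x
  rw [hx] at hxy
  filter_upwards [Ioo_mem_nhdsGT (by positivity : (0 : ℝ) < 2 * ε)] with r ⟨hr, hrε⟩
  obtain ⟨w, hw⟩ := exists_closedBall_subset_closedBall_inter_ball hr (hxy ▸ hrε.le)
  refine ⟨w, fun z hz => ⟨(hw hz).1, fun (hzε : infDist z K = ε) => ?_⟩⟩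
  have hzy : dist z y < ε := hxy ▸ (hw hz).2
  have : infDist z K ≤ dist z y := infDist_closure (x := z) ▸ infDist_le_dist_of_mem hyK
  exact (this.trans_lt hzy).ne hzε

variable [MeasurableSpace E] [BorelSpace E] [FiniteDimensional ℝ E] (μ : Measure E)
  [μ.IsAddHaarMeasure]

theorem addHaar_inter_closedBall_div_le_of_closedBall_subset_diff {S : Set E} {x w : E}
    {κ r : ℝ} (hκ : 0 ≤ κ) (hr : 0 < r) (hw : closedBall w (κ * r) ⊆ closedBall x r \ S) :
    μ (S ∩ closedBall x r) / μ (closedBall x r) ≤ 1 - ENNReal.ofReal (κ ^ finrank ℝ E) := by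
  have hfin : μ (closedBall x r) ≠ ⊤ := measure_closedBall_lt_top.ne
  have hhole :
      μ (closedBall w (κ * r)) = ENNReal.ofReal (κ ^ finrank ℝ E) * μ (closedBall x r) := by
    rw [Measure.addHaar_closedBall_mul μ w hκ hr.le, Measure.addHaar_closedBall_center μ x]
  rw [ENNReal.div_le_iff (measure_closedBall_pos μ x hr).ne' hfin,
    ENNReal.sub_mul (fun _ _ => hfin), one_mul, ← hhole]
  calc μ (S ∩ closedBall x r)
      ≤ μ (closedBall x r \ closedBall w (κ * r)) :=
        measure_mono fun z hz => ⟨hz.2, fun hzw => (hw hzw).2 hz.1⟩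
    _ = μ (closedBall x r) - μ (closedBall w (κ * r)) :=
        measure_sdiff (fun z hz => (hw hz).1) measurableSet_closedBall.nullMeasurableSet
          measure_closedBall_lt_top.ne

theorem IsPorous.addHaar_eq_zero {S : Set E} {κ : ℝ} (hκ : 0 < κ) (hS : IsPorous κ S) :
    μ S = 0 := by
  have hdensity_lt : 1 - ENNReal.ofReal (κ ^ finrank ℝ E) < 1 :=
    ENNReal.sub_lt_self ENNReal.one_ne_top one_ne_zero (ENNReal.ofReal_pos.2 (by positivity)).ne'
  rw [← Measure.restrict_apply_self]
  refine measure_mono_null (fun x hxS => ?_)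
    (ae_iff.1 (Besicovitch.ae_tendsto_measure_inter_div μ S))
  intro hx
  obtain ⟨r, hr, ⟨w, hw⟩, hlt⟩ := ((eventually_mem_nhdsWithin (s := Ioi (0 : ℝ))).and
    ((hS x hxS).and (hx.eventually (lt_mem_nhds hdensity_lt)))).exists
  exact hlt.not_ge (addHaar_inter_closedBall_div_le_of_closedBall_subset_diff μ hκ.le hr hw)

end NormedSpace

theorem stmt_1_general {n : ℕ} (K : Set (EuclideanSpace ℝ (Fin n))) (ε : ℝ) (hε : 0 < ε) :
    MeasureTheory.volume (frontier (Metric.cthickening ε K)) = 0 :=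
  measure_mono_null (frontier_cthickening_subset_infDist_eq K hε.le)
    ((isPorous_infDist_eq K hε).addHaar_eq_zero volume (by norm_num))

/-- The boundary of the closed `ε`-neighborhood of a nonempty compact set
`K ⊆ ℝⁿ` has Lebesgue measure zero. -/
theorem stmt_1 {n : ℕ} (K : Set (EuclideanSpace ℝ (Fin n))) (hK : IsCompact K)
    (hne : K.Nonempty) (ε : ℝ) (hε : 0 < ε) :
    MeasureTheory.volume (frontier (Metric.cthickening ε K)) = 0 :=
  stmt_1_general K ε hε
end

section
/- Let f : X → X be a map on a set X and v : ℤ₊ × X → ℝ a subadditive cocycle over f with ω := sup over n ≥ 1 and x ∈ X of |v_n(x)|/n finite. Then for every x ∈ X, n ≥ 1 and ε ∈ (0, 2ω), there exists a time 0 ≤ n₁ < n such that (1/k) v_k(f^{n₁}(x)) > (1/n) v_n(x) − ε for all 0 < k ≤ n − n₁, and moreover n − n₁ ≥ εn/(2ω). -/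
/-!
Put `a = v_n(x)/n - ε` and `D(m) = v_m(x) - m a`, with the convention `v_0 = 0` (which
keeps `v` subadditive). Then `D(0) = 0 < nε = D(n)`, so the last time `n₁ < n` at which `D`
attains its minimum on `[0, n)` is followed by strictly larger values of `D` up to time `n`;
subadditivity turns `D(n₁) < D(n₁ + k)` into `v_k(f^{n₁} x) > k a`. For the length bound,
`D(n₁) ≤ 0` and `|v_m| ≤ ω m` force `a ≥ -ω` when `n₁ > 0`, and splitting `v_n(x)` at `n₁`
gives `nε = D(n) ≤ (n - n₁)(ω - a) ≤ 2ω (n - n₁)`.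
-/

def IsSubadditiveCocycle {X : Type*} (f : X → X) (v : ℕ → X → ℝ) : Prop :=
  ∀ (n m : ℕ) (x : X), v (n + m) x ≤ v n x + v m (f^[n] x)

lemma exists_last_min_of_apply_zero_lt {α : Type*} [LinearOrder α] {D : ℕ → α} {n : ℕ}
    (h : D 0 < D n) : ∃ n₁ < n, D n₁ ≤ D 0 ∧ ∀ j, n₁ < j → j ≤ n → D n₁ < D j := by
  have hn : 0 < n := Nat.pos_of_ne_zero (by rintro rfl; exact lt_irrefl _ h)
  have h0n : 0 ∈ Finset.range n := Finset.mem_range.2 hn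
  obtain ⟨m, hm, hmin⟩ := (Finset.range n).exists_min_image D ⟨0, h0n⟩
  set S := (Finset.range n).filter (fun j => D j ≤ D m)
  obtain ⟨n₁, hn₁S, hlast⟩ := S.exists_max_image id ⟨m, Finset.mem_filter.2 ⟨hm, le_rfl⟩⟩
  obtain ⟨hn₁, hn₁m⟩ := Finset.mem_filter.1 hn₁S
  have hn₁lt : n₁ < n := Finset.mem_range.1 hn₁
  refine ⟨n₁, hn₁lt, hn₁m.trans (hmin 0 h0n), fun j hj hjn => ?_⟩
  rcases hjn.lt_or_eq with hjn | rfl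
  · by_contra! hle
    have hjS : j ∈ S := Finset.mem_filter.2 ⟨Finset.mem_range.2 hjn, hle.trans hn₁m⟩
    exact (hlast j hjS).not_gt hj
  · exact (hn₁m.trans (hmin 0 h0n)).trans_lt h

namespace IsSubadditiveCocycle

variable {X : Type*} {f : X → X} {v : ℕ → X → ℝ}

lemma update_zero (hv : IsSubadditiveCocycle f v) :
    IsSubadditiveCocycle f (Function.update v 0 0) := by
  intro n m x
  rcases Nat.eq_zero_or_pos n with rfl | hn
  · simp
  rcases Nat.eq_zero_or_pos m with rfl | hm
  · simp
  simpa [Function.update_of_ne hn.ne', Function.update_of_ne hm.ne',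
    Function.update_of_ne (Nat.add_pos_left hn m).ne'] using hv n m x

lemma exists_forall_mul_lt_apply_iterate (hv : IsSubadditiveCocycle f v) {x : X}
    (h0 : v 0 x = 0) {n : ℕ} {a : ℝ} (ha : n * a < v n x) :
    ∃ n₁ < n, v n₁ x ≤ n₁ * a ∧ ∀ k, 0 < k → k ≤ n - n₁ → k * a < v k (f^[n₁] x) := by
  set D : ℕ → ℝ := fun m => v m x - m * a
  obtain ⟨n₁, hn₁, hmin, hafter⟩ :=
    exists_last_min_of_apply_zero_lt (D := D) (n := n) (by
      simp only [D, h0, Nat.cast_zero, zero_mul, sub_self, sub_pos]; exact ha)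
  refine ⟨n₁, hn₁, by simpa [D, h0] using hmin, fun k hk hkn => ?_⟩
  have hlt : D n₁ < D (n₁ + k) := hafter (n₁ + k) (by omega) (by omega)
  have hsplit := hv n₁ k x
  simp only [D] at hlt
  push_cast at hlt
  linarith

lemma sub_mul_le_of_le_mul (hv : IsSubadditiveCocycle f v) {ω : ℝ}
    (hω : ∀ (m : ℕ) (y : X), 0 < m → |v m y| ≤ ω * m) {x : X} {n n₁ : ℕ} {a : ℝ}
    (hn₁ : n₁ < n) (hpos : 0 < n₁) (hle : v n₁ x ≤ n₁ * a) :
    v n x - n * a ≤ 2 * ω * (n - n₁) := by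
  have hsplit := hv n₁ (n - n₁) x
  rw [Nat.add_sub_cancel' hn₁.le] at hsplit
  have htail := (abs_le.1 (hω (n - n₁) (f^[n₁] x) (by omega))).2
  have hhead := (abs_le.1 (hω n₁ x hpos)).1
  rw [Nat.cast_sub hn₁.le] at htail
  have hn₁R : (0 : ℝ) < n₁ := by exact_mod_cast hpos
  have hnn₁ : (n₁ : ℝ) < n := by exact_mod_cast hn₁
  have ha : -ω ≤ a := by nlinarith
  nlinarith

end IsSubadditiveCocycle

/-- For a subadditive cocycle `v` over `f` with `|v_n(x)| ≤ ω n`, for every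
`x`, `n ≥ 1` and `ε ∈ (0, 2ω)` there is `0 ≤ n₁ < n` with
`(1/k) v_k(f^{n₁}(x)) > (1/n) v_n(x) − ε` for all `0 < k ≤ n − n₁`, and
`n − n₁ ≥ ε n/(2ω)`. -/
theorem stmt_2 {X : Type*} (f : X → X) (v : ℕ → X → ℝ)
    (hsub : ∀ (n m : ℕ) (x : X), v (n + m) x ≤ v n x + v m (f^[n] x))
    (ω : ℝ) (hω : ∀ (n : ℕ) (x : X), 0 < n → |v n x| ≤ ω * n)
    (x : X) (n : ℕ) (hn : 0 < n) (ε : ℝ) (hε0 : 0 < ε) (hε2 : ε < 2 * ω) :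
    ∃ n₁ : ℕ, n₁ < n ∧
      (∀ k : ℕ, 0 < k → k ≤ n - n₁ → v n x / n - ε < v k (f^[n₁] x) / k) ∧
      ε * n / (2 * ω) ≤ ((n : ℝ) - n₁) := by
  have hnR : (0 : ℝ) < n := by exact_mod_cast hn
  have hw : IsSubadditiveCocycle f (Function.update v 0 0) :=
    IsSubadditiveCocycle.update_zero hsub
  have hwω : ∀ (m : ℕ) (y : X), 0 < m → |Function.update v 0 0 m y| ≤ ω * m := fun m y hm => by
    simpa [Function.update_of_ne hm.ne'] using hω m y hm
  set a := v n x / n - ε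
  have hexcess : v n x - n * a = n * ε := by simp only [a]; field_simp; ring
  obtain ⟨n₁, hn₁, hle, hgood⟩ := hw.exists_forall_mul_lt_apply_iterate (x := x) (n := n)
    (a := a) (by simp) (by rw [Function.update_of_ne hn.ne']; nlinarith)
  refine ⟨n₁, hn₁, fun k hk hkn => ?_, ?_⟩
  · have hgood := hgood k hk hkn
    rw [Function.update_of_ne hk.ne'] at hgood
    rw [lt_div_iff₀ (by exact_mod_cast hk)]
    linarith
  · rw [div_le_iff₀ (by linarith)]
    rcases Nat.eq_zero_or_pos n₁ with rfl | hpos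
    · push_cast; nlinarith
    · have hbound := hw.sub_mul_le_of_le_mul hwω hn₁ hpos hle
      rw [Function.update_of_ne hn.ne'] at hbound
      linarith
end

section
/- Let T : X → X be a homeomorphism of a compact metric space X. If the set of periodic points of T is dense in X and X is connected, then T is chain transitive: for every ε > 0 and all x, y ∈ X there exists a finite sequence x = x₀, x₁, …, x_n = y with n ≥ 1 and d(T(xᵢ), x_{i+1}) ≤ ε for all 0 ≤ i < n. -/
/-- Concatenation of two chains. -/
lemma chain_comp {X : Type*} [MetricSpace X] (T : X → X) (δ : ℝ) {x y z : X}
    (h1 : ∃ (n : ℕ) (c : ℕ → X), 1 ≤ n ∧ c 0 = x ∧ c n = y ∧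
      ∀ i < n, dist (T (c i)) (c (i + 1)) ≤ δ)
    (h2 : ∃ (n : ℕ) (c : ℕ → X), 1 ≤ n ∧ c 0 = y ∧ c n = z ∧
      ∀ i < n, dist (T (c i)) (c (i + 1)) ≤ δ) :
    ∃ (n : ℕ) (c : ℕ → X), 1 ≤ n ∧ c 0 = x ∧ c n = z ∧
      ∀ i < n, dist (T (c i)) (c (i + 1)) ≤ δ := by
  obtain ⟨n, c, hn, hc0, hcn, hc⟩ := h1
  obtain ⟨m, d, hm, hd0, hdm, hd⟩ := h2
  refine ⟨n + m, fun i => if i ≤ n then c i else d (i - n), by omega, by simp [hc0, hn], ?_, ?_⟩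
  · have : ¬ (n + m ≤ n) := by omega
    simp only [this, if_false]
    simpa using hdm
  · intro i hi
    rcases lt_or_ge i n with h | h
    · have h1 : i ≤ n := by omega
      have h2 : i + 1 ≤ n := by omega
      simp only [h1, h2, if_true]
      exact hc i h
    · have h1 : ¬ (i + 1 ≤ n) := by omega
      rcases eq_or_lt_of_le h with he | hl
      · have h2 : i ≤ n := by omega
        simp only [h2, if_true, h1, if_false]
        have : i + 1 - n = 1 := by omega
        rw [this, ← he, hcn, ← hd0]
        exact hd 0 hm
      · have h2 : ¬ (i ≤ n) := by omega
        simp only [h1, h2, if_false]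
        have : i + 1 - n = (i - n) + 1 := by omega
        rw [this]
        exact hd (i - n) (by omega)

/-- Key lemma: uniformly, nearby points are joined by a δ-chain, using a nearby
periodic point. -/
lemma chain_near {X : Type*} [MetricSpace X] [CompactSpace X]
    (T : X ≃ₜ X) (hper : Dense {x : X | ∃ n : ℕ, 1 ≤ n ∧ (⇑T)^[n] x = x})
    (δ : ℝ) (hδ : 0 < δ) :
    ∃ η > (0 : ℝ), ∀ a b : X, dist a b < η →
      ∃ (n : ℕ) (c : ℕ → X), 1 ≤ n ∧ c 0 = a ∧ c n = b ∧
        ∀ i < n, dist (T (c i)) (c (i + 1)) ≤ δ := by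
  have hu : UniformContinuous T := CompactSpace.uniformContinuous_of_continuous T.continuous
  obtain ⟨η₁, hη₁, hT⟩ := Metric.uniformContinuous_iff.mp hu δ hδ
  refine ⟨min η₁ (δ / 2), by positivity, fun a b hab => ?_⟩
  -- pick a periodic point p near a
  obtain ⟨p, hp, k, hk, hpk⟩ :
      ∃ p, dist p a < min η₁ (δ / 2) ∧ ∃ k : ℕ, 1 ≤ k ∧ (⇑T)^[k] p = p := by
    obtain ⟨p, hp1, hp2⟩ := Metric.dense_iff.mp hper a (min η₁ (δ / 2)) (by positivity)
    exact ⟨p, by simpa [dist_comm] using Metric.mem_ball.mp hp1, hp2⟩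
  set N := k * 2 with hN
  have hpN : (⇑T)^[N] p = p := by
    rw [hN, Function.iterate_mul]
    simp [hpk]
  have hN2 : 2 ≤ N := by omega
  refine ⟨N, fun i => if i = 0 then a else if i < N then (⇑T)^[i] p else b,
    by omega, by simp, ?_, ?_⟩
  · show (if N = 0 then a else if N < N then (⇑T)^[N] p else b) = b
    rw [if_neg (by omega : ¬ N = 0), if_neg (lt_irrefl N)]
  intro i hi
  show dist (T (if i = 0 then a else if i < N then (⇑T)^[i] p else b))
    (if i + 1 = 0 then a else if i + 1 < N then (⇑T)^[i+1] p else b) ≤ δ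
  rcases Nat.eq_zero_or_pos i with rfl | hipos
  · rw [if_pos rfl, if_neg (by omega : ¬ (0:ℕ) + 1 = 0), if_pos (by omega : 0 + 1 < N)]
    have : dist (T p) (T a) < δ := hT (lt_of_lt_of_le hp (min_le_left _ _))
    calc dist (T a) ((⇑T)^[0+1] p) = dist (T p) (T a) := by
          norm_num [dist_comm]
      _ ≤ δ := le_of_lt this
  · have hine : i ≠ 0 := by omega
    rcases lt_or_ge (i + 1) N with hlt | hge
    · rw [if_neg hine, if_pos hi, if_neg (by omega : ¬ i + 1 = 0), if_pos hlt,
        Function.iterate_succ_apply']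
      simp [hδ.le]
    · have hiN : i + 1 = N := by omega
      rw [if_neg hine, if_pos hi, if_neg (by omega : ¬ i + 1 = 0),
        if_neg (by omega : ¬ i + 1 < N)]
      have : T ((⇑T)^[i] p) = p := by
        rw [← Function.iterate_succ_apply' (⇑T) i p, show i.succ = N from hiN]; exact hpN
      rw [this]
      calc dist p b ≤ dist p a + dist a b := dist_triangle _ _ _
        _ ≤ δ / 2 + δ / 2 := by
            have h1 := lt_of_lt_of_le hp (min_le_right _ _)
            have h2 := lt_of_lt_of_le hab (min_le_right _ _)
            linarith
        _ = δ := by ring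

/-- A homeomorphism of a compact connected metric space with dense periodic
points is chain transitive. -/
theorem stmt_6 {X : Type*} [MetricSpace X] [CompactSpace X] [ConnectedSpace X]
    (T : X ≃ₜ X) (hper : Dense {x : X | ∃ n : ℕ, 1 ≤ n ∧ (⇑T)^[n] x = x}) :
    ∀ ε > (0 : ℝ), ∀ x y : X, ∃ (n : ℕ) (c : ℕ → X), 1 ≤ n ∧ c 0 = x ∧ c n = y ∧
      ∀ i < n, dist (T (c i)) (c (i + 1)) ≤ ε := by
  intro ε hε x y
  obtain ⟨η, hη, hkey⟩ := chain_near T hper (ε / 2) (by positivity)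
  set S : Set X := {z | ∃ (n : ℕ) (c : ℕ → X), 1 ≤ n ∧ c 0 = x ∧ c n = z ∧
      ∀ i < n, dist (T (c i)) (c (i + 1)) ≤ ε / 2} with hS
  have hxS : x ∈ S := hkey x x (by simpa using hη)
  have hopen : IsOpen S := by
    rw [Metric.isOpen_iff]
    intro z hz
    exact ⟨η, hη, fun w hw => chain_comp T (ε / 2) hz (hkey z w (Metric.mem_ball'.mp hw))⟩
  have hclosed : IsClosed S := by
    refine isClosed_of_closure_subset fun z hz => ?_
    obtain ⟨w, hwS, hwz⟩ := Metric.mem_closure_iff.mp hz η hη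
    exact chain_comp T (ε / 2) hwS (hkey w z (by rwa [dist_comm]))
  have : S = Set.univ := (IsClopen.eq_univ ⟨hclosed, hopen⟩ ⟨x, hxS⟩)
  obtain ⟨n, c, hn, hc0, hcn, hc⟩ : y ∈ S := this ▸ Set.mem_univ y
  exact ⟨n, c, hn, hc0, hcn, fun i hi => le_trans (hc i hi) (by linarith)⟩
end

section
/- Let Q be a uniformly hyperbolic set of a C¹ control system. Then the stable and unstable subspaces depend continuously on the base point: if (u_k, x_k) → (u,x) in L(Q), and if for each k one chooses an orthonormal basis of E⁻(u_k, x_k) converging (in the tangent bundle) to a tuple of vectors (v⁽¹⁾, …, v⁽ᵈ⁻⁾) in T_xM, then these limit vectors form an orthonormal basis of E⁻(u,x); the analogous statement holds for E⁺. -/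
/-!
Both subspaces are cut out, over the base points of `L(Q)`, by countably many inequalities
`‖Dφ_t(u,x) v‖ ≤ c λ^t ‖v‖` whose two sides depend continuously on `(u, x, v)`; so the limit of
vectors of `E^±(u_k, x_k)` lies in `E^±(u, x)`. Limits of orthonormal families are orthonormal,
and an orthonormal family of `dim E^±(u, x)` vectors in `E^±(u, x)` spans it.
-/

open Filter Topology Module

theorem Orthonormal.of_tendsto {𝕜 E ι α : Type*} [RCLike 𝕜] [NormedAddCommGroup E]
    [InnerProductSpace 𝕜 E] {l : Filter α} [l.NeBot] {b : α → ι → E} {w : ι → E}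
    (hb : ∀ᶠ k in l, Orthonormal 𝕜 (b k)) (hw : ∀ i, Tendsto (fun k => b k i) l (𝓝 (w i))) :
    Orthonormal 𝕜 w := by
  classical
  rw [orthonormal_iff_ite]
  intro i j
  refine tendsto_nhds_unique ((hw i).inner (hw j)) (tendsto_const_nhds.congr' ?_)
  filter_upwards [hb] with k hk using (orthonormal_iff_ite.mp hk i j).symm

theorem LinearIndependent.span_eq_of_le_of_card_eq_finrank {K V ι : Type*} [DivisionRing K]
    [AddCommGroup V] [Module K V] [Fintype ι] {b : ι → V} {E : Submodule K V}
    [FiniteDimensional K E] (hb : LinearIndependent K b) (hbE : ∀ i, b i ∈ E)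
    (hcard : finrank K E = Fintype.card ι) : Submodule.span K (Set.range b) = E :=
  Submodule.eq_of_le_of_finrank_le (Submodule.span_le.mpr (Set.range_subset_iff.mpr hbE))
    (by rw [hcard, finrank_span_eq_card hb])

theorem isClosed_setOf_forall_norm_le {X V W τ : Type*} [TopologicalSpace X]
    [SeminormedAddCommGroup V] [SeminormedAddCommGroup W] {A : τ → X × V → W}
    (hA : ∀ t, Continuous (A t)) (C : τ → ℝ) :
    IsClosed {z : X × V | ∀ t, ‖A t z‖ ≤ C t * ‖z.2‖} := by
  simp only [Set.ofPred_forall]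
  exact isClosed_iInter fun t => isClosed_le (hA t).norm (by fun_prop)

theorem orthonormal_and_span_eq_of_tendsto {𝕜 X V ι α : Type*} [RCLike 𝕜] [TopologicalSpace X]
    [NormedAddCommGroup V] [InnerProductSpace 𝕜 V] [FiniteDimensional 𝕜 V] [Fintype ι]
    {E : X → Submodule 𝕜 V} {S : Set X} {F : Set (X × V)} (hF : IsClosed F)
    (hEF : ∀ q ∈ S, ∀ v, v ∈ E q ↔ (q, v) ∈ F)
    (hdim : ∀ q ∈ S, finrank 𝕜 (E q) = Fintype.card ι)
    {l : Filter α} [l.NeBot] {q : α → X} {q₀ : X} (hqS : ∀ k, q k ∈ S) (hq₀S : q₀ ∈ S)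
    (hq : Tendsto q l (𝓝 q₀)) {b : α → ι → V} {w : ι → V}
    (hb : ∀ k, Orthonormal 𝕜 (b k)) (hbE : ∀ k i, b k i ∈ E (q k))
    (hw : ∀ i, Tendsto (fun k => b k i) l (𝓝 (w i))) :
    Orthonormal 𝕜 w ∧ (∀ i, w i ∈ E q₀) ∧ Submodule.span 𝕜 (Set.range w) = E q₀ := by
  have hwo : Orthonormal 𝕜 w := .of_tendsto (.of_forall hb) hw
  have hwE : ∀ i, w i ∈ E q₀ := fun i =>
    (hEF q₀ hq₀S _).mpr <| hF.mem_of_tendsto (hq.prodMk_nhds (hw i)) <|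
      .of_forall fun k => (hEF (q k) (hqS k) _).mp (hbE k i)
  exact ⟨hwo, hwE, hwo.linearIndependent.span_eq_of_le_of_card_eq_finrank hwE (hdim q₀ hq₀S)⟩

theorem stmt_14_general {V U : Type*} [NormedAddCommGroup V] [InnerProductSpace ℝ V]
    [FiniteDimensional ℝ V] [MetricSpace U]
    (φ : ℤ → V → (ℤ → U) → V)
    (hcontD : ∀ t : ℤ, Continuous (fun q : ((ℤ → U) × V) × V =>
      fderiv ℝ (fun x : V => φ t x q.1.1) q.1.2 q.2))
    (Q : Set V)
    (Em Ep : (ℤ → U) × V → Submodule ℝ V)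
    (c lam : ℝ)
    (hcharm : ∀ p : (ℤ → U) × V, (∀ t : ℤ, φ t p.2 p.1 ∈ Q) → ∀ v : V,
      v ∈ Em p ↔ ∀ t : ℕ, ‖fderiv ℝ (fun x : V => φ (t : ℤ) x p.1) p.2 v‖ ≤ c * lam ^ t * ‖v‖)
    (hcharp : ∀ p : (ℤ → U) × V, (∀ t : ℤ, φ t p.2 p.1 ∈ Q) → ∀ v : V,
      v ∈ Ep p ↔ ∀ t : ℕ, ‖fderiv ℝ (fun x : V => φ (-(t : ℤ)) x p.1) p.2 v‖ ≤ c * lam ^ t * ‖v‖)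
    (dm dp : ℕ)
    (hdim : ∀ p : (ℤ → U) × V, (∀ t : ℤ, φ t p.2 p.1 ∈ Q) →
      Module.finrank ℝ (Em p) = dm ∧ Module.finrank ℝ (Ep p) = dp)
    (pk : ℕ → (ℤ → U) × V) (p : (ℤ → U) × V)
    (hpk : ∀ k, ∀ t : ℤ, φ t (pk k).2 (pk k).1 ∈ Q)
    (hp : ∀ t : ℤ, φ t p.2 p.1 ∈ Q)
    (hconv : Filter.Tendsto pk Filter.atTop (nhds p)) :
    (∀ (b : ℕ → Fin dm → V) (w : Fin dm → V),
      (∀ k, Orthonormal ℝ (b k) ∧ (∀ i, b k i ∈ Em (pk k)) ∧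
        Submodule.span ℝ (Set.range (b k)) = Em (pk k)) →
      (∀ i, Filter.Tendsto (fun k => b k i) Filter.atTop (nhds (w i))) →
      Orthonormal ℝ w ∧ (∀ i, w i ∈ Em p) ∧
        Submodule.span ℝ (Set.range w) = Em p) ∧
    (∀ (b : ℕ → Fin dp → V) (w : Fin dp → V),
      (∀ k, Orthonormal ℝ (b k) ∧ (∀ i, b k i ∈ Ep (pk k)) ∧
        Submodule.span ℝ (Set.range (b k)) = Ep (pk k)) →
      (∀ i, Filter.Tendsto (fun k => b k i) Filter.atTop (nhds (w i))) →
      Orthonormal ℝ w ∧ (∀ i, w i ∈ Ep p) ∧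
        Submodule.span ℝ (Set.range w) = Ep p) := by
  have hclosed (f : ℕ → ℤ) : IsClosed {z : ((ℤ → U) × V) × V |
      ∀ t : ℕ, ‖fderiv ℝ (fun x : V => φ (f t) x z.1.1) z.1.2 z.2‖ ≤ c * lam ^ t * ‖z.2‖} :=
    isClosed_setOf_forall_norm_le (fun t => hcontD (f t)) _
  constructor
  · intro b w hb hw
    exact orthonormal_and_span_eq_of_tendsto (hclosed _) hcharm
      (fun q hq => by rw [(hdim q hq).1, Fintype.card_fin]) hpk hp hconv
      (fun k => (hb k).1) (fun k => (hb k).2.1) hw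
  · intro b w hb hw
    exact orthonormal_and_span_eq_of_tendsto (hclosed _) hcharp
      (fun q hq => by rw [(hdim q hq).2, Fintype.card_fin]) hpk hp hconv
      (fun k => (hb k).1) (fun k => (hb k).2.1) hw

/-- For a uniformly hyperbolic set, the stable and unstable subspaces depend
continuously on the base point: if `(u_k,x_k) → (u,x)` in `L(Q)` and orthonormal bases of
`E⁻(u_k,x_k)` (resp. `E⁺(u_k,x_k)`) converge vectorwise, then the limit vectors form an
orthonormal basis of `E⁻(u,x)` (resp. `E⁺(u,x)`). -/
theorem stmt_14 {V U : Type*} [NormedAddCommGroup V] [InnerProductSpace ℝ V]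
    [FiniteDimensional ℝ V] [MetricSpace U] [CompactSpace U]
    (φ : ℤ → V → (ℤ → U) → V)
    (h0 : ∀ (x : V) (u : ℤ → U), φ 0 x u = x)
    (hcoc : ∀ (t s : ℤ) (x : V) (u : ℤ → U),
      φ (t + s) x u = φ s (φ t x u) (fun n : ℤ => u (n + t)))
    (hdiff : ∀ (t : ℤ) (u : ℤ → U), Differentiable ℝ (fun x : V => φ t x u))
    (hcontD : ∀ t : ℤ, Continuous (fun q : ((ℤ → U) × V) × V =>
      fderiv ℝ (fun x : V => φ t x q.1.1) q.1.2 q.2))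
    (Q : Set V) (hQ : IsCompact Q)
    (Em Ep : (ℤ → U) × V → Submodule ℝ V)
    (c lam : ℝ) (hc : 1 ≤ c) (hlam0 : 0 < lam) (hlam1 : lam < 1)
    (hcharm : ∀ p : (ℤ → U) × V, (∀ t : ℤ, φ t p.2 p.1 ∈ Q) → ∀ v : V,
      v ∈ Em p ↔ ∀ t : ℕ, ‖fderiv ℝ (fun x : V => φ (t : ℤ) x p.1) p.2 v‖ ≤ c * lam ^ t * ‖v‖)
    (hcharp : ∀ p : (ℤ → U) × V, (∀ t : ℤ, φ t p.2 p.1 ∈ Q) → ∀ v : V,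
      v ∈ Ep p ↔ ∀ t : ℕ, ‖fderiv ℝ (fun x : V => φ (-(t : ℤ)) x p.1) p.2 v‖ ≤ c * lam ^ t * ‖v‖)
    (dm dp : ℕ)
    (hdim : ∀ p : (ℤ → U) × V, (∀ t : ℤ, φ t p.2 p.1 ∈ Q) →
      Module.finrank ℝ (Em p) = dm ∧ Module.finrank ℝ (Ep p) = dp)
    (pk : ℕ → (ℤ → U) × V) (p : (ℤ → U) × V)
    (hpk : ∀ k, ∀ t : ℤ, φ t (pk k).2 (pk k).1 ∈ Q)
    (hp : ∀ t : ℤ, φ t p.2 p.1 ∈ Q)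
    (hconv : Filter.Tendsto pk Filter.atTop (nhds p)) :
    (∀ (b : ℕ → Fin dm → V) (w : Fin dm → V),
      (∀ k, Orthonormal ℝ (b k) ∧ (∀ i, b k i ∈ Em (pk k)) ∧
        Submodule.span ℝ (Set.range (b k)) = Em (pk k)) →
      (∀ i, Filter.Tendsto (fun k => b k i) Filter.atTop (nhds (w i))) →
      Orthonormal ℝ w ∧ (∀ i, w i ∈ Em p) ∧
        Submodule.span ℝ (Set.range w) = Em p) ∧
    (∀ (b : ℕ → Fin dp → V) (w : Fin dp → V),
      (∀ k, Orthonormal ℝ (b k) ∧ (∀ i, b k i ∈ Ep (pk k)) ∧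
        Submodule.span ℝ (Set.range (b k)) = Ep (pk k)) →
      (∀ i, Filter.Tendsto (fun k => b k i) Filter.atTop (nhds (w i))) →
      Orthonormal ℝ w ∧ (∀ i, w i ∈ Ep p) ∧
        Submodule.span ℝ (Set.range w) = Ep p) :=
  stmt_14_general φ hcontD Q Em Ep c lam hcharm hcharp dm dp hdim pk p hpk hp hconv
end

section
/- Let Q be a compact all-time controlled invariant set whose fiber map u ↦ Q(u) is continuous (upper and lower semicontinuous) in the Hausdorff metric on 𝒰_Q = 𝒰. Then for every ε > 0 there exists τ₀ ∈ ℤ_{>0} such that for all u ∈ 𝒰, the set Q^±(u, τ₀) := {x ∈ M : φ(t,x,u) ∈ Q for all −τ₀ < t < τ₀} is contained in the closed ε-neighborhood N_ε(Q(u)) of the fiber Q(u). -/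
/-!
Call `K τ ⊆ M × 𝒰` the set of pairs `(x, u)` with `x ∈ Q^±(u, τ)`. For `τ ≥ 1` these sets are
closed subsets of the compact set `Q × 𝒰`, and they decrease, as `τ → ∞`, to the graph
`{(x, u) | x ∈ Q(u)}` of the fiber map. Continuity of the fiber map in the Hausdorff metric makes
`{(x, u) | dist(x, Q(u)) < ε}` an open neighbourhood of this graph, so by compactness it already
contains some `K τ₀`.
-/

open Metric Set

section FiniteTimeGraph

variable {M 𝒰 : Type*} (φ : ℤ → M → 𝒰 → M) (Q : Set M)

def finiteTimeGraph (τ : ℕ) : Set (M × 𝒰) :=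
  {p | ∀ t : ℤ, -(τ : ℤ) < t → t < τ → φ t p.1 p.2 ∈ Q}

theorem antitone_finiteTimeGraph : Antitone (finiteTimeGraph φ Q) :=
  fun _ _ hστ _ hp t ht₁ ht₂ => hp t (by omega) (by omega)

theorem isClosed_finiteTimeGraph [TopologicalSpace M] [TopologicalSpace 𝒰]
    (hcont : ∀ t, Continuous fun p : M × 𝒰 => φ t p.1 p.2)
    (hQ : IsClosed Q) (τ : ℕ) : IsClosed (finiteTimeGraph φ Q τ) := by
  simp only [finiteTimeGraph, ofPred_forall]
  exact isClosed_iInter fun t => isClosed_iInter fun _ => isClosed_iInter fun _ =>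
    hQ.preimage (hcont t)

theorem finiteTimeGraph_subset_prod (h0 : ∀ x u, φ 0 x u = x) {τ : ℕ} (hτ : 0 < τ) :
    finiteTimeGraph φ Q τ ⊆ Q ×ˢ univ := fun p hp =>
  ⟨h0 p.1 p.2 ▸ hp 0 (by omega) (by omega), mem_univ _⟩

theorem iInter_finiteTimeGraph_succ_subset :
    ⋂ n : ℕ, finiteTimeGraph φ Q (n + 1) ⊆ {p | ∀ t, φ t p.1 p.2 ∈ Q} := fun p hp t =>
  mem_iInter.1 hp t.natAbs t (by omega) (by omega)

theorem exists_finiteTimeGraph_subset [TopologicalSpace M] [T2Space M] [TopologicalSpace 𝒰]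
    [CompactSpace 𝒰] (h0 : ∀ x u, φ 0 x u = x)
    (hcont : ∀ t, Continuous fun p : M × 𝒰 => φ t p.1 p.2) (hQ : IsCompact Q)
    {O : Set (M × 𝒰)} (hO : IsOpen O) (hfiber : {p | ∀ t, φ t p.1 p.2 ∈ Q} ⊆ O) :
    ∃ τ : ℕ, 0 < τ ∧ finiteTimeGraph φ Q τ ⊆ O := by
  have hclosed := fun n : ℕ => isClosed_finiteTimeGraph φ Q hcont hQ.isClosed (n + 1)
  obtain ⟨n, hn⟩ :=
    exists_subset_nhds_of_isCompact' (V := fun n : ℕ => finiteTimeGraph φ Q (n + 1))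
      ((antitone_finiteTimeGraph φ Q).comp_monotone (fun _ _ h => Nat.succ_le_succ h)).directed_ge
      (fun n => (hQ.prod isCompact_univ).of_isClosed_subset (hclosed n)
        (finiteTimeGraph_subset_prod φ Q h0 n.succ_pos))
      hclosed fun p hp => hO.mem_nhds (hfiber (iInter_finiteTimeGraph_succ_subset φ Q hp))
  exact ⟨n + 1, n.succ_pos, hn⟩

end FiniteTimeGraph

theorem isOpen_setOf_infDist_lt {M X : Type*} [MetricSpace M] [TopologicalSpace X]
    {F : X → TopologicalSpace.NonemptyCompacts M} (hF : Continuous F) (ε : ℝ) :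
    IsOpen {p : M × X | infDist p.1 (F p.2) < ε} :=
  isOpen_lt (lipschitz_infDist.continuous.comp (f := fun p : M × X => (p.1, F p.2))
    (by fun_prop)) continuous_const

theorem stmt_15_general {M U : Type*} [MetricSpace M] [MetricSpace U] [CompactSpace U]
    (φ : ℤ → M → (ℤ → U) → M)
    (h0 : ∀ (x : M) (u : ℤ → U), φ 0 x u = x)
    (hcont : ∀ t : ℤ, Continuous (fun p : M × (ℤ → U) => φ t p.1 p.2))
    (Q : Set M) (hQ : IsCompact Q)
    (F : (ℤ → U) → TopologicalSpace.NonemptyCompacts M)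
    (hF : ∀ u : ℤ → U, (F u : Set M) = {x : M | ∀ t : ℤ, φ t x u ∈ Q})
    (hFc : Continuous F) :
    ∀ ε > (0 : ℝ), ∃ τ₀ : ℕ, 0 < τ₀ ∧ ∀ u : ℤ → U,
      {x : M | ∀ t : ℤ, -(τ₀ : ℤ) < t → t < τ₀ → φ t x u ∈ Q} ⊆
        Metric.cthickening ε {x : M | ∀ t : ℤ, φ t x u ∈ Q} := by
  intro ε hε
  have hfiber : {p : M × (ℤ → U) | ∀ t, φ t p.1 p.2 ∈ Q} ⊆ {p | infDist p.1 (F p.2) < ε} :=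
    fun p hp => by
      have hmem : p.1 ∈ (F p.2 : Set M) := (hF p.2).symm ▸ hp
      simpa only [mem_ofPred_eq, infDist_zero_of_mem hmem] using hε
  obtain ⟨τ, hτ, hsub⟩ :=
    exists_finiteTimeGraph_subset φ Q h0 hcont hQ (isOpen_setOf_infDist_lt hFc ε) hfiber
  refine ⟨τ, hτ, fun u x hx => ?_⟩
  have hlt : infDist x (F u) < ε := hsub (a := (x, u)) hx
  obtain ⟨y, hy, hxy⟩ := (infDist_lt_iff (F u).nonempty).1 hlt
  rw [← hF u]
  exact mem_cthickening_of_dist_le x y ε _ hy hxy.le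

/-- If the fiber map `u ↦ Q(u)` of a compact all-time controlled invariant set
`Q` is continuous in the Hausdorff metric, then for every `ε > 0` there is `τ₀ ≥ 1` such
that for all `u`, the set `Q^±(u,τ₀) = {x : φ(t,x,u) ∈ Q for −τ₀ < t < τ₀}` is contained
in the closed `ε`-neighborhood of the fiber `Q(u)`. -/
theorem stmt_15 {M U : Type*} [MetricSpace M] [MetricSpace U] [CompactSpace U]
    (φ : ℤ → M → (ℤ → U) → M)
    (h0 : ∀ (x : M) (u : ℤ → U), φ 0 x u = x)
    (hcoc : ∀ (t s : ℤ) (x : M) (u : ℤ → U),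
      φ (t + s) x u = φ s (φ t x u) (fun n : ℤ => u (n + t)))
    (hcont : ∀ t : ℤ, Continuous (fun p : M × (ℤ → U) => φ t p.1 p.2))
    (Q : Set M) (hQ : IsCompact Q)
    (hQinv : ∀ x ∈ Q, ∃ u : ℤ → U, ∀ t : ℤ, φ t x u ∈ Q)
    (F : (ℤ → U) → TopologicalSpace.NonemptyCompacts M)
    (hF : ∀ u : ℤ → U, (F u : Set M) = {x : M | ∀ t : ℤ, φ t x u ∈ Q})
    (hFc : Continuous F) :
    ∀ ε > (0 : ℝ), ∃ τ₀ : ℕ, 0 < τ₀ ∧ ∀ u : ℤ → U,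
      {x : M | ∀ t : ℤ, -(τ₀ : ℤ) < t → t < τ₀ → φ t x u ∈ Q} ⊆
        Metric.cthickening ε {x : M | ∀ t : ℤ, φ t x u ∈ Q} :=
  stmt_15_general φ h0 hcont Q hQ F hF hFc
end

section
/- Let Q be a uniformly hyperbolic set of a control system. Then Q is expansive in the following uniform sense: there exists δ > 0 such that for all (u,x) ∈ L(Q) and y ∈ M, if d(φ(t,x,u), φ(t,y,u)) ≤ δ for all t ∈ ℤ, then x = y. In particular, each fiber Q(u) contains no two distinct points whose φ(·,·,u)-orbits stay within distance δ of each other for all time. -/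
/-!
Fix a time `N` with `c λ^N ≤ 1/8`. Along an orbit in `L(Q)` the time-`N` derivatives form a
sequence of linear maps contracting the stable and expanding the unstable subspaces by the factor
`8`; this bounds the projections of the invariant splittings by `‖Dφ_N‖ + 2`, uniformly by
compactness of `U^ℤ × Q`. If the orbit of `y` stays `δ`-close to that of `x`, the differences
`z k = φ(kN, y) - φ(kN, x)` satisfy this linear recursion up to a relative error `ε`, which
uniform continuity of `Dφ_N` near `U^ℤ × Q` makes as small as needed. The stable components of the
bounded sequence `z` are then controlled forwards and the unstable ones backwards, and comparing
suprema forces both to vanish, so `x = y`.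
-/

open Set Filter Topology

theorem Submodule.projection_apply_of_mapsTo {R M : Type*} [Ring R] [AddCommGroup M]
    [Module R M] {E F E' F' : Submodule R M} (h : IsCompl E F) (h' : IsCompl E' F') {B : M →ₗ[R] M}
    (hE : MapsTo B E E') (hF : MapsTo B F F') (x : M) :
    E'.projection F' h' (B x) = B (E.projection F h x) := by
  conv_lhs => rw [← E.projection_add_projection_eq_self h x, map_add, map_add]
  rw [E'.projection_apply_of_mem_left h' (hE (E.projection_apply_mem h x)),
    E'.projection_apply_of_mem_right h' (hF (F.projection_apply_mem h.symm x)), add_zero]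

theorem eq_zero_of_bddAbove_of_dichotomy_ineq {a b : ℤ → ℝ} (ha0 : ∀ k, 0 ≤ a k)
    (hb0 : ∀ k, 0 ≤ b k) (ha : BddAbove (range a)) (hb : BddAbove (range b)) {η γ : ℝ}
    (hη0 : 0 ≤ η) (hη : η ≤ 1 / 8) (hγ0 : 0 ≤ γ) (hγ : γ ≤ 1 / 8)
    (hfwd : ∀ k, a (k + 1) ≤ η * a k + γ * (a k + b k))
    (hbwd : ∀ k, b k ≤ η * (b (k + 1) + γ * (a k + b k))) (k : ℤ) :
    a k = 0 ∧ b k = 0 := by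
  set α := ⨆ k, a k
  set β := ⨆ k, b k
  have hα : ∀ k, a k ≤ α := le_ciSup ha
  have hβ : ∀ k, b k ≤ β := le_ciSup hb
  have hαβ : ∀ k, γ * (a k + b k) ≤ γ * (α + β) := fun k =>
    mul_le_mul_of_nonneg_left (add_le_add (hα k) (hβ k)) hγ0
  have hα' : α ≤ η * α + γ * (α + β) := ciSup_le fun k => by
    simpa using (hfwd (k - 1)).trans
      (add_le_add (mul_le_mul_of_nonneg_left (hα _) hη0) (hαβ _))
  have hβ' : β ≤ η * (β + γ * (α + β)) := ciSup_le fun k =>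
    (hbwd k).trans (mul_le_mul_of_nonneg_left (add_le_add (hβ _) (hαβ k)) hη0)
  have hα0 : 0 ≤ α := (ha0 0).trans (hα 0)
  have hβ0 : 0 ≤ β := (hb0 0).trans (hβ 0)
  -- with `η, γ ≤ 1/8` the two inequalities give `6α ≤ β` and `55β ≤ α`
  have hαβ0 : α = 0 ∧ β = 0 := by
    constructor <;> nlinarith [mul_le_mul_of_nonneg_left hγ (add_nonneg hα0 hβ0),
      mul_le_mul_of_nonneg_right hη hα0, mul_le_mul_of_nonneg_right hη hβ0,
      mul_le_mul_of_nonneg_right hη (mul_nonneg hγ0 (add_nonneg hα0 hβ0))]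
  exact ⟨le_antisymm (hαβ0.1 ▸ hα k) (ha0 k), le_antisymm (hαβ0.2 ▸ hβ k) (hb0 k)⟩

section Splitting

variable {V : Type*} [NormedAddCommGroup V] [NormedSpace ℝ V]

theorem norm_le_of_contract_of_expand {E F : Submodule ℝ V} {B : V →L[ℝ] V} {η K : ℝ}
    (hη0 : 0 ≤ η) (hη : η ≤ 1 / 2) (hB : ‖B‖ ≤ K)
    (hE : ∀ v ∈ E, ‖B v‖ ≤ η * ‖v‖) (hF : ∀ w ∈ F, ‖w‖ ≤ η * ‖B w‖)
    {v w : V} (hv : v ∈ E) (hw : w ∈ F) :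
    ‖v‖ ≤ (K + 2) * ‖v + w‖ ∧ ‖w‖ ≤ (K + 2) * ‖v + w‖ := by
  have hK : 0 ≤ K := (norm_nonneg _).trans hB
  have hBw : ‖B w‖ ≤ K * ‖v + w‖ + η * ‖v‖ :=
    calc ‖B w‖ = ‖B (v + w) - B v‖ := by rw [map_add, add_sub_cancel_left]
      _ ≤ ‖B (v + w)‖ + ‖B v‖ := norm_sub_le _ _
      _ ≤ K * ‖v + w‖ + η * ‖v‖ := add_le_add (B.le_of_opNorm_le hB _) (hE v hv)
  have hv' : ‖v‖ ≤ ‖v + w‖ + ‖w‖ := by simpa using norm_sub_le (v + w) w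
  have hw' : ‖w‖ ≤ (K + 1) * ‖v + w‖ := by
    have hηη : η * η ≤ 1 / 4 := by nlinarith
    have hKs : 0 ≤ K * ‖v + w‖ := mul_nonneg hK (norm_nonneg _)
    have hw4 : ‖w‖ ≤ 1 / 2 * (K * ‖v + w‖) + 1 / 4 * (‖v + w‖ + ‖w‖) :=
      calc ‖w‖ ≤ η * ‖B w‖ := hF w hw
        _ ≤ η * (K * ‖v + w‖) + η * η * (‖v + w‖ + ‖w‖) := by
          nlinarith [mul_le_mul_of_nonneg_left hBw hη0,
            mul_le_mul_of_nonneg_left hv' (mul_nonneg hη0 hη0)]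
        _ ≤ 1 / 2 * (K * ‖v + w‖) + 1 / 4 * (‖v + w‖ + ‖w‖) := by gcongr
    nlinarith [norm_nonneg (v + w)]
  constructor <;> nlinarith [norm_nonneg (v + w)]

structure IsHyperbolicSequence (E F : ℤ → Submodule ℝ V) (B : ℤ → V →L[ℝ] V) (η K : ℝ) :
    Prop where
  isCompl : ∀ k, IsCompl (E k) (F k)
  mapsTo_stable : ∀ k, MapsTo (B k) (E k) (E (k + 1))
  mapsTo_unstable : ∀ k, MapsTo (B k) (F k) (F (k + 1))
  norm_le : ∀ k, ‖B k‖ ≤ K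
  contract : ∀ k, ∀ v ∈ E k, ‖B k v‖ ≤ η * ‖v‖
  expand : ∀ k, ∀ w ∈ F k, ‖w‖ ≤ η * ‖B k w‖

namespace IsHyperbolicSequence

variable {E F : ℤ → Submodule ℝ V} {B : ℤ → V →L[ℝ] V} {η K : ℝ}

theorem norm_projection_le (h : IsHyperbolicSequence E F B η K) (hη0 : 0 ≤ η)
    (hη : η ≤ 1 / 2) (k : ℤ) (x : V) :
    ‖(E k).projection (F k) (h.isCompl k) x‖ ≤ (K + 2) * ‖x‖ ∧
      ‖(F k).projection (E k) (h.isCompl k).symm x‖ ≤ (K + 2) * ‖x‖ := by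
  simpa only [Submodule.projection_add_projection_eq_self] using
    norm_le_of_contract_of_expand hη0 hη (h.norm_le k) (h.contract k) (h.expand k)
      ((E k).projection_apply_mem (h.isCompl k) x)
      ((F k).projection_apply_mem (h.isCompl k).symm x)

theorem norm_projection_succ_le (h : IsHyperbolicSequence E F B η K) (hη0 : 0 ≤ η)
    (hη : η ≤ 1 / 2) (k : ℤ) (x y : V) :
    ‖(E (k + 1)).projection (F (k + 1)) (h.isCompl (k + 1)) y‖ ≤
        η * ‖(E k).projection (F k) (h.isCompl k) x‖ + (K + 2) * ‖y - B k x‖ ∧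
      ‖(F k).projection (E k) (h.isCompl k).symm x‖ ≤
        η * (‖(F (k + 1)).projection (E (k + 1)) (h.isCompl (k + 1)).symm y‖ +
          (K + 2) * ‖y - B k x‖) := by
  set P := (E k).projection (F k) (h.isCompl k)
  set P' := (F k).projection (E k) (h.isCompl k).symm
  set Q := (E (k + 1)).projection (F (k + 1)) (h.isCompl (k + 1))
  set Q' := (F (k + 1)).projection (E (k + 1)) (h.isCompl (k + 1)).symm
  have hQ : Q (B k x) = B k (P x) :=
    Submodule.projection_apply_of_mapsTo _ _ (h.mapsTo_stable k) (h.mapsTo_unstable k) x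
  have hQ' : Q' (B k x) = B k (P' x) :=
    Submodule.projection_apply_of_mapsTo _ _ (h.mapsTo_unstable k) (h.mapsTo_stable k) x
  have hr := h.norm_projection_le hη0 hη (k + 1) (y - B k x)
  constructor
  · calc ‖Q y‖ = ‖B k (P x) + Q (y - B k x)‖ := by rw [map_sub, hQ, add_sub_cancel]
      _ ≤ _ := norm_add_le_of_le (h.contract k _ (Submodule.projection_apply_mem _ _)) hr.1
  · refine (h.expand k _ (Submodule.projection_apply_mem _ _)).trans
      (mul_le_mul_of_nonneg_left ?_ hη0)
    calc ‖B k (P' x)‖ = ‖Q' y - Q' (y - B k x)‖ := by rw [map_sub, hQ', sub_sub_cancel]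
      _ ≤ _ := norm_sub_le_of_le le_rfl hr.2

theorem eq_zero_of_bddAbove (h : IsHyperbolicSequence E F B η K) (hη0 : 0 ≤ η)
    (hη : η ≤ 1 / 8) {ε : ℝ} (hε0 : 0 ≤ ε) (hε : (K + 2) * ε ≤ 1 / 8) {z : ℤ → V}
    (hz : BddAbove (range fun k => ‖z k‖))
    (hzB : ∀ k, ‖z (k + 1) - B k (z k)‖ ≤ ε * ‖z k‖) (k : ℤ) : z k = 0 := by
  set P := fun k => (E k).projection (F k) (h.isCompl k)
  set P' := fun k => (F k).projection (E k) (h.isCompl k).symm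
  have hPP' : ∀ k, P k (z k) + P' k (z k) = z k := fun k =>
    Submodule.projection_add_projection_eq_self _ _
  have hproj := h.norm_projection_le hη0 (by linarith)
  have hK : 0 ≤ K + 2 := by linarith [(norm_nonneg _).trans (h.norm_le 0)]
  have hr : ∀ k, (K + 2) * ‖z (k + 1) - B k (z k)‖ ≤
      (K + 2) * ε * (‖P k (z k)‖ + ‖P' k (z k)‖) := fun k => by
    rw [mul_assoc]
    refine mul_le_mul_of_nonneg_left ((hzB k).trans (mul_le_mul_of_nonneg_left ?_ hε0)) hK
    exact (congrArg norm (hPP' k)).symm.trans_le (norm_add_le _ _)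
  have hstep := fun k => h.norm_projection_succ_le hη0 (by linarith) k (z k) (z (k + 1))
  obtain ⟨C, hC⟩ := hz
  have hbdd : ∀ R : ℤ → V →ₗ[ℝ] V, (∀ k x, ‖R k x‖ ≤ (K + 2) * ‖x‖) →
      BddAbove (range fun k => ‖R k (z k)‖) := fun R hR =>
    ⟨(K + 2) * C, forall_mem_range.2 fun k =>
      (hR k _).trans (mul_le_mul_of_nonneg_left (hC (mem_range_self k)) hK)⟩
  obtain ⟨ha, hb⟩ := eq_zero_of_bddAbove_of_dichotomy_ineq
    (fun k => norm_nonneg (P k (z k))) (fun k => norm_nonneg (P' k (z k)))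
    (hbdd P fun k x => (hproj k x).1)
    (hbdd P' fun k x => (hproj k x).2) hη0 hη (by positivity) hε
    (fun k => (hstep k).1.trans (add_le_add le_rfl (hr k)))
    (fun k => (hstep k).2.trans (mul_le_mul_of_nonneg_left (add_le_add le_rfl (hr k)) hη0)) k
  rw [← hPP' k, norm_eq_zero.1 ha, norm_eq_zero.1 hb, add_zero]

end IsHyperbolicSequence

end Splitting

section UniformLinearization

variable {X V : Type*} [TopologicalSpace X] [NormedAddCommGroup V]

theorem IsCompact.exists_pos_forall_dist_le {Y : Type*} [PseudoMetricSpace Y] {g : X × V → Y}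
    (hg : Continuous g) {S : Set (X × V)} (hS : IsCompact S) {ε : ℝ} (hε : 0 < ε) :
    ∃ δ > 0, ∀ p ∈ S, ∀ y, ‖y - p.2‖ ≤ δ → dist (g (p.1, y)) (g p) ≤ ε := by
  have hnear : ∀ᶠ w in 𝓝 (0 : V), ∀ p ∈ S, dist (g (p.1, p.2 + w)) (g p) < ε := by
    refine hS.eventually_forall_of_forall_eventually fun p _ => ?_
    have hcont : Continuous fun q : V × (X × V) => dist (g (q.2.1, q.2.2 + q.1)) (g q.2) := by
      fun_prop
    exact hcont.continuousAt.eventually_lt continuousAt_const (by simpa using hε)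
  obtain ⟨r, hr, hball⟩ := Metric.eventually_nhds_iff_ball.1 hnear
  refine ⟨r / 2, half_pos hr, fun p hp y hy => ?_⟩
  have hyr : y - p.2 ∈ Metric.ball 0 r := by rw [mem_ball_zero_iff]; linarith
  simpa using (hball _ hyr p hp).le

variable [NormedSpace ℝ V] {W : Type*} [NormedAddCommGroup W] [NormedSpace ℝ W]

theorem IsCompact.exists_pos_forall_norm_sub_sub_fderiv_le {f : X → V → W}
    (hf : ∀ x, Differentiable ℝ (f x)) (hf' : Continuous fun p : X × V => fderiv ℝ (f p.1) p.2)
    {S : Set (X × V)} (hS : IsCompact S) {ε : ℝ} (hε : 0 < ε) :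
    ∃ δ > 0, ∀ p ∈ S, ∀ y, ‖y - p.2‖ ≤ δ →
      ‖f p.1 y - f p.1 p.2 - fderiv ℝ (f p.1) p.2 (y - p.2)‖ ≤ ε * ‖y - p.2‖ := by
  obtain ⟨δ, hδ, hD⟩ := hS.exists_pos_forall_dist_le hf' hε
  refine ⟨δ, hδ, fun p hp y hy => ?_⟩
  have hball : ∀ ξ ∈ Metric.closedBall p.2 δ,
      ‖fderiv ℝ (f p.1) ξ - fderiv ℝ (f p.1) p.2‖ ≤ ε := fun ξ hξ => by
    rw [← dist_eq_norm]
    exact hD p hp ξ (by rwa [← dist_eq_norm])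
  exact (convex_closedBall p.2 δ).norm_image_sub_le_of_norm_fderiv_le'
    (fun ξ _ => (hf p.1).differentiableAt) hball (Metric.mem_closedBall_self hδ.le)
    (by rwa [Metric.mem_closedBall, dist_eq_norm])

end UniformLinearization

namespace ControlSystem

variable {V U : Type*}

/-- The set `L(Q)` of the paper. -/
def lift (φ : ℤ → V → (ℤ → U) → V) (Q : Set V) : Set ((ℤ → U) × V) :=
  {p | ∀ t, φ t p.2 p.1 ∈ Q}

def skewProduct (φ : ℤ → V → (ℤ → U) → V) (t : ℤ) (p : (ℤ → U) × V) : (ℤ → U) × V :=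
  (fun n => p.1 (n + t), φ t p.2 p.1)

section Orbit

variable {φ : ℤ → V → (ℤ → U) → V}

theorem skewProduct_skewProduct
    (hcoc : ∀ t s x u, φ (t + s) x u = φ s (φ t x u) fun n => u (n + t))
    (t s : ℤ) (p : (ℤ → U) × V) :
    skewProduct φ s (skewProduct φ t p) = skewProduct φ (t + s) p := by
  refine Prod.ext (funext fun n => ?_) (hcoc t s p.2 p.1).symm
  simp only [skewProduct, add_assoc, add_comm s t]

theorem skewProduct_mem_lift
    (hcoc : ∀ t s x u, φ (t + s) x u = φ s (φ t x u) fun n => u (n + t))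
    {Q : Set V} {p : (ℤ → U) × V} (hp : p ∈ lift φ Q) (t : ℤ) :
    skewProduct φ t p ∈ lift φ Q := fun s => by
  simpa only [skewProduct, ← hcoc] using hp (t + s)

end Orbit

variable [NormedAddCommGroup V] [NormedSpace ℝ V]

noncomputable def fderivCocycle (φ : ℤ → V → (ℤ → U) → V) (t : ℤ) (p : (ℤ → U) × V) :
    V →L[ℝ] V :=
  fderiv ℝ (fun x => φ t x p.1) p.2

variable {φ : ℤ → V → (ℤ → U) → V}

theorem fderivCocycle_add
    (hcoc : ∀ t s x u, φ (t + s) x u = φ s (φ t x u) fun n => u (n + t))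
    (hdiff : ∀ t u, Differentiable ℝ fun x => φ t x u) (t s : ℤ) (p : (ℤ → U) × V) :
    fderivCocycle φ (t + s) p =
      (fderivCocycle φ s (skewProduct φ t p)).comp (fderivCocycle φ t p) := by
  have hcomp : (fun x => φ (t + s) x p.1) =
      (fun y => φ s y fun n => p.1 (n + t)) ∘ fun x => φ t x p.1 :=
    funext fun x => hcoc t s x p.1
  rw [fderivCocycle, hcomp, fderiv_comp _ (hdiff _ _ _) (hdiff _ _ _)]
  rfl

theorem fderivCocycle_neg_apply (h0 : ∀ x u, φ 0 x u = x)
    (hcoc : ∀ t s x u, φ (t + s) x u = φ s (φ t x u) fun n => u (n + t))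
    (hdiff : ∀ t u, Differentiable ℝ fun x => φ t x u) (t : ℤ) (p : (ℤ → U) × V) (v : V) :
    fderivCocycle φ (-t) (skewProduct φ t p) (fderivCocycle φ t p v) = v := by
  have hid : fderivCocycle φ 0 p = ContinuousLinearMap.id ℝ V := by
    rw [fderivCocycle, funext fun x => h0 x p.1, fderiv_fun_id]
  simpa [hid] using congr($(fderivCocycle_add hcoc hdiff t (-t) p) v).symm

theorem isHyperbolicSequence_fderivCocycle (h0 : ∀ x u, φ 0 x u = x)
    (hcoc : ∀ t s x u, φ (t + s) x u = φ s (φ t x u) fun n => u (n + t))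
    (hdiff : ∀ t u, Differentiable ℝ fun x => φ t x u) {Q : Set V}
    {Em Ep : (ℤ → U) × V → Submodule ℝ V} {N : ℕ} {η K : ℝ}
    (hsplit : ∀ p ∈ lift φ Q, IsCompl (Em p) (Ep p))
    (hinv : ∀ p ∈ lift φ Q,
      (Em p).map (fderivCocycle φ N p).toLinearMap ≤ Em (skewProduct φ N p) ∧
        (Ep p).map (fderivCocycle φ N p).toLinearMap ≤ Ep (skewProduct φ N p))
    (hcontr : ∀ p ∈ lift φ Q, (∀ v ∈ Em p, ‖fderivCocycle φ N p v‖ ≤ η * ‖v‖) ∧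
      ∀ v ∈ Ep p, ‖fderivCocycle φ (-N) p v‖ ≤ η * ‖v‖)
    (hK : ∀ p : (ℤ → U) × V, p.2 ∈ Q → ‖fderivCocycle φ N p‖ ≤ K)
    {p : (ℤ → U) × V} (hp : p ∈ lift φ Q) :
    IsHyperbolicSequence (fun k => Em (skewProduct φ (k * N) p))
      (fun k => Ep (skewProduct φ (k * N) p))
      (fun k => fderivCocycle φ N (skewProduct φ (k * N) p)) η K := by
  have hq : ∀ k : ℤ, skewProduct φ (k * N) p ∈ lift φ Q :=
    fun k => skewProduct_mem_lift hcoc hp _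
  have hnext : ∀ k : ℤ, skewProduct φ N (skewProduct φ (k * N) p) =
      skewProduct φ ((k + 1) * N) p := fun k => by
    rw [skewProduct_skewProduct hcoc, add_one_mul]
  refine ⟨fun k => hsplit _ (hq k), fun k v hv => ?_, fun k v hv => ?_,
    fun k => hK _ (hp _), fun k => (hcontr _ (hq k)).1, fun k v hv => ?_⟩
  · simpa only [ContinuousLinearMap.coe_coe, SetLike.mem_coe, ← hnext] using
      (hinv _ (hq k)).1 (Submodule.mem_map_of_mem hv)
  · simpa only [ContinuousLinearMap.coe_coe, SetLike.mem_coe, ← hnext] using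
      (hinv _ (hq k)).2 (Submodule.mem_map_of_mem hv)
  · have hw := (hinv _ (hq k)).2 (Submodule.mem_map_of_mem hv)
    simpa only [ContinuousLinearMap.coe_coe, fderivCocycle_neg_apply h0 hcoc hdiff] using
      (hcontr _ (skewProduct_mem_lift hcoc (hq k) N)).2 _ hw

theorem exists_pos_norm_sub_sub_fderivCocycle_le [TopologicalSpace U] [CompactSpace U]
    (hcoc : ∀ t s x u, φ (t + s) x u = φ s (φ t x u) fun n => u (n + t))
    (hdiff : ∀ t u, Differentiable ℝ fun x => φ t x u) {N : ℤ}
    (hcontD : Continuous fun p : (ℤ → U) × V => fderivCocycle φ N p) {Q : Set V}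
    (hQ : IsCompact Q) {ε : ℝ} (hε : 0 < ε) :
    ∃ δ > 0, ∀ p ∈ lift φ Q, ∀ y t, ‖φ t y p.1 - φ t p.2 p.1‖ ≤ δ →
      ‖φ (t + N) y p.1 - φ (t + N) p.2 p.1 -
          fderivCocycle φ N (skewProduct φ t p) (φ t y p.1 - φ t p.2 p.1)‖ ≤
        ε * ‖φ t y p.1 - φ t p.2 p.1‖ := by
  obtain ⟨δ, hδ, hlin⟩ := (isCompact_univ.prod hQ).exists_pos_forall_norm_sub_sub_fderiv_le
    (f := fun u x => φ N x u) (fun u => hdiff N u) hcontD hε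
  refine ⟨δ, hδ, fun p hp y t hy => ?_⟩
  rw [hcoc, hcoc]
  exact hlin (skewProduct φ t p) ⟨mem_univ _, hp t⟩ (φ t y p.1) hy

end ControlSystem

open ControlSystem

theorem stmt_18_general {V U : Type*} [NormedAddCommGroup V] [InnerProductSpace ℝ V]
    [MetricSpace U] [CompactSpace U]
    (φ : ℤ → V → (ℤ → U) → V)
    (h0 : ∀ (x : V) (u : ℤ → U), φ 0 x u = x)
    (hcoc : ∀ (t s : ℤ) (x : V) (u : ℤ → U),
      φ (t + s) x u = φ s (φ t x u) (fun n : ℤ => u (n + t)))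
    (hdiff : ∀ (t : ℤ) (u : ℤ → U), ContDiff ℝ 1 (fun x : V => φ t x u))
    (hcontD : ∀ t : ℤ, Continuous (fun p : (ℤ → U) × V =>
      fderiv ℝ (fun x : V => φ t x p.1) p.2))
    (Q : Set V) (hQ : IsCompact Q)
    (Em Ep : (ℤ → U) × V → Submodule ℝ V)
    (hsplit : ∀ p : (ℤ → U) × V, (∀ t : ℤ, φ t p.2 p.1 ∈ Q) → IsCompl (Em p) (Ep p))
    (hinv : ∀ p : (ℤ → U) × V, (∀ t : ℤ, φ t p.2 p.1 ∈ Q) → ∀ t : ℤ,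
      (Em p).map (fderiv ℝ (fun x : V => φ t x p.1) p.2).toLinearMap =
          Em ((fun n : ℤ => p.1 (n + t)), φ t p.2 p.1) ∧
      (Ep p).map (fderiv ℝ (fun x : V => φ t x p.1) p.2).toLinearMap =
          Ep ((fun n : ℤ => p.1 (n + t)), φ t p.2 p.1))
    (c lam : ℝ) (hc : 1 ≤ c) (hlam0 : 0 < lam) (hlam1 : lam < 1)
    (hcontr : ∀ p : (ℤ → U) × V, (∀ t : ℤ, φ t p.2 p.1 ∈ Q) → ∀ t : ℕ,
      (∀ v ∈ Em p, ‖fderiv ℝ (fun x : V => φ (t : ℤ) x p.1) p.2 v‖ ≤ c * lam ^ t * ‖v‖) ∧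
      (∀ v ∈ Ep p, ‖fderiv ℝ (fun x : V => φ (-(t : ℤ)) x p.1) p.2 v‖ ≤ c * lam ^ t * ‖v‖)) :
    ∃ δ : ℝ, 0 < δ ∧ ∀ p : (ℤ → U) × V, (∀ t : ℤ, φ t p.2 p.1 ∈ Q) → ∀ y : V,
      (∀ t : ℤ, dist (φ t p.2 p.1) (φ t y p.1) ≤ δ) → p.2 = y := by
  have hdiff' : ∀ t u, Differentiable ℝ fun x => φ t x u :=
    fun t u => (hdiff t u).differentiable one_ne_zero
  obtain ⟨N, hN⟩ : ∃ N : ℕ, c * lam ^ N ≤ 1 / 8 := by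
    obtain ⟨N, hN⟩ := exists_pow_lt_of_lt_one (by positivity : 0 < 1 / (8 * c)) hlam1
    rw [lt_div_iff₀ (by positivity)] at hN
    exact ⟨N, by linarith⟩
  obtain ⟨K, hK⟩ := (isCompact_univ.prod hQ).exists_bound_of_continuousOn (hcontD N).continuousOn
  set K' := max K 0
  set ε := 1 / (8 * (K' + 2))
  have hKε : (K' + 2) * ε = 1 / 8 := by
    have hK2 : K' + 2 ≠ 0 := by positivity
    simp only [ε]
    field_simp
  obtain ⟨δ, hδ, hlin⟩ :=
    exists_pos_norm_sub_sub_fderivCocycle_le hcoc hdiff' (hcontD N) hQ (by positivity : 0 < ε)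
  refine ⟨δ, hδ, fun p hp y hy => ?_⟩
  have hclose : ∀ t, ‖φ t y p.1 - φ t p.2 p.1‖ ≤ δ := fun t => by
    rw [← dist_eq_norm, dist_comm]
    exact hy t
  have hhyp := isHyperbolicSequence_fderivCocycle (K := K') h0 hcoc hdiff' hsplit
    (fun q hq => ⟨(hinv q hq N).1.le, (hinv q hq N).2.le⟩) (fun q hq => hcontr q hq N)
    (fun q hq => (hK q ⟨mem_univ _, hq⟩).trans (le_max_left _ _)) hp
  have hzero := hhyp.eq_zero_of_bddAbove (by positivity) hN (by positivity) hKε.le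
    (z := fun k : ℤ => φ (k * N) y p.1 - φ (k * N) p.2 p.1)
    ⟨δ, forall_mem_range.2 fun k => hclose _⟩
    (fun k => by simpa only [add_one_mul] using hlin p hp y (k * N) (hclose _)) 0
  simpa [h0, sub_eq_zero, eq_comm] using hzero

/-- A uniformly hyperbolic set `Q` of a control system is uniformly expansive:
there is `δ > 0` such that whenever `(u,x) ∈ L(Q)` and `y ∈ M` satisfy
`d(φ(t,x,u), φ(t,y,u)) ≤ δ` for all `t ∈ ℤ`, then `x = y`. -/
theorem stmt_18 {V U : Type*} [NormedAddCommGroup V] [InnerProductSpace ℝ V]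
    [FiniteDimensional ℝ V] [MetricSpace U] [CompactSpace U]
    (φ : ℤ → V → (ℤ → U) → V)
    (h0 : ∀ (x : V) (u : ℤ → U), φ 0 x u = x)
    (hcoc : ∀ (t s : ℤ) (x : V) (u : ℤ → U),
      φ (t + s) x u = φ s (φ t x u) (fun n : ℤ => u (n + t)))
    (hcont : ∀ t : ℤ, Continuous (fun p : V × (ℤ → U) => φ t p.1 p.2))
    (hdiff : ∀ (t : ℤ) (u : ℤ → U), ContDiff ℝ 1 (fun x : V => φ t x u))
    (hcontD : ∀ t : ℤ, Continuous (fun p : (ℤ → U) × V =>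
      fderiv ℝ (fun x : V => φ t x p.1) p.2))
    (Q : Set V) (hQ : IsCompact Q) (hQne : Q.Nonempty)
    (hQinv : ∀ x ∈ Q, ∃ u : ℤ → U, ∀ t : ℤ, φ t x u ∈ Q)
    (Em Ep : (ℤ → U) × V → Submodule ℝ V)
    (hsplit : ∀ p : (ℤ → U) × V, (∀ t : ℤ, φ t p.2 p.1 ∈ Q) → IsCompl (Em p) (Ep p))
    (hinv : ∀ p : (ℤ → U) × V, (∀ t : ℤ, φ t p.2 p.1 ∈ Q) → ∀ t : ℤ,
      (Em p).map (fderiv ℝ (fun x : V => φ t x p.1) p.2).toLinearMap =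
          Em ((fun n : ℤ => p.1 (n + t)), φ t p.2 p.1) ∧
      (Ep p).map (fderiv ℝ (fun x : V => φ t x p.1) p.2).toLinearMap =
          Ep ((fun n : ℤ => p.1 (n + t)), φ t p.2 p.1))
    (c lam : ℝ) (hc : 1 ≤ c) (hlam0 : 0 < lam) (hlam1 : lam < 1)
    (hcontr : ∀ p : (ℤ → U) × V, (∀ t : ℤ, φ t p.2 p.1 ∈ Q) → ∀ t : ℕ,
      (∀ v ∈ Em p, ‖fderiv ℝ (fun x : V => φ (t : ℤ) x p.1) p.2 v‖ ≤ c * lam ^ t * ‖v‖) ∧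
      (∀ v ∈ Ep p, ‖fderiv ℝ (fun x : V => φ (-(t : ℤ)) x p.1) p.2 v‖ ≤ c * lam ^ t * ‖v‖))
    (dm dp : ℕ)
    (hdim : ∀ p : (ℤ → U) × V, (∀ t : ℤ, φ t p.2 p.1 ∈ Q) →
      Module.finrank ℝ (Em p) = dm ∧ Module.finrank ℝ (Ep p) = dp) :
    ∃ δ : ℝ, 0 < δ ∧ ∀ p : (ℤ → U) × V, (∀ t : ℤ, φ t p.2 p.1 ∈ Q) → ∀ y : V,
      (∀ t : ℤ, dist (φ t p.2 p.1) (φ t y p.1) ≤ δ) → p.2 = y :=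
  stmt_18_general φ h0 hcoc hdiff hcontD Q hQ Em Ep hsplit hinv c lam hc hlam0 hlam1 hcontr
end
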